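/- Let F be a finite field with exactly q elements, E a field extension of F of finite degree h, and U an F-subspace of E × E with dim_F U = k, where 5 ≤ k ≤ h. Suppose there is a nonzero v₀ ∈ U with dim_F (U ∩ span_E{v₀}) = k − 2, and that every nonzero u ∈ U with u ∉ span_E{v₀} satisfies dim_F (U ∩ span_E{u}) = 2 (one point of weight k − 2, all other points of weight 2). Then there exist an intermediate field K of E/F and a K-linear F-subspace W of E × E with L_W = L_U, such that s := [K : F] satisfies s > 1 and s divides k − 2; i.e. L_U has geometric field of linearity K with 1 < [K : F] dividing k − 2. -/

import Mathlib

/-- The `F`-linear set of projective points of `PG(1,E)` determined by the `F`-subspace `U`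
of `E × E`: the `E`-spans of the nonzero vectors of `U`. -/
def LSet (F : Type*) {E : Type*} [Field F] [Field E] [Algebra F E]
    (U : Submodule F (E × E)) : Set (Submodule E (E × E)) :=
  {p | ∃ u ∈ U, u ≠ 0 ∧ p = Submodule.span E {u}}

/-!
Let `y(v) = det(v₀, v)`, so that `ker y = ⟨v₀⟩_E`, let `T = {λ | λ v₀ ∈ U}`, of dimension `k - 2`,
and `B = y(U)`, of dimension `2` by rank–nullity. For `u ∈ U` with `y(u) ≠ 0` the weight-`2` space
`{λ | λ u ∈ U}` lies in the `2`-dimensional space `y(u)⁻¹ B`, hence equals it. It follows that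
`b⁻¹ B` multiplies `T` into itself for every `b ∈ B \ 0`, so the stabiliser field
`K = {e | e T ⊆ T}` contains the `2`-dimensional space `b⁻¹ B`, while `T` is a `K`-space, whence
`[K : F] ∣ k - 2`. Choosing `u₀ ∈ U` with `y(u₀) ≠ 0`, the `K`-subspace `K u₀ + T v₀` defines the
same linear set as `U`: both meet `⟨v₀⟩` in `T v₀` and every other point of their linear sets in a
vector of `u₀ + T v₀`.
-/

open Module Submodule

section CoeffSpace

variable {F E M N : Type*} [Field F] [Field E] [Algebra F E]
  [AddCommGroup M] [Module E M] [Module F M] [IsScalarTower F E M]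
  [AddCommGroup N] [Module E N] [Module F N] [IsScalarTower F E N]

variable (E) in
def coeffSpace (U : Submodule F M) (u : M) : Submodule F E :=
  U.comap ((LinearMap.toSpanSingleton E M u).restrictScalars F)

@[simp]
lemma mem_coeffSpace {U : Submodule F M} {u : M} {a : E} : a ∈ coeffSpace E U u ↔ a • u ∈ U :=
  Iff.rfl

lemma finrank_coeffSpace [NoZeroSMulDivisors E M] (U : Submodule F M) {u : M} (hu : u ≠ 0) :
    finrank F (coeffSpace E U u) = finrank F ↥(U ⊓ (span E {u}).restrictScalars F) := by
  set f := (LinearMap.toSpanSingleton E M u).restrictScalars F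
  have hf : Function.Injective f := smul_left_injective E hu
  have hrange : LinearMap.range f = (span E {u}).restrictScalars F := by
    rw [LinearMap.range_restrictScalars, LinearMap.span_singleton_eq_range]
  rw [(equivMapOfInjective f hf _).finrank_eq, coeffSpace, map_comap_eq, hrange, inf_comm]

lemma finrank_coeffSpace_self (B : Submodule F E) {c : E} (hc : c ≠ 0) :
    finrank F (coeffSpace E B c) = finrank F B := by
  have htop : span E {c} = ⊤ := Ideal.span_singleton_eq_top.2 hc.isUnit
  rw [finrank_coeffSpace B hc, htop, restrictScalars_top, inf_top_eq]

lemma coeffSpace_le_coeffSpace_map (f : M →ₗ[E] N) (U : Submodule F M) (u : M) :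
    coeffSpace E U u ≤ coeffSpace E (U.map (f.restrictScalars F)) (f u) := fun a ha =>
  ⟨a • u, ha, map_smul f a u⟩

end CoeffSpace

section Det

variable {E : Type*} [Field E]

def det₂ (v₀ : E × E) : (E × E) →ₗ[E] E where
  toFun v := v₀.2 * v.1 - v₀.1 * v.2
  map_add' u v := by simp only [Prod.fst_add, Prod.snd_add]; ring
  map_smul' c v := by simp only [Prod.smul_fst, Prod.smul_snd, smul_eq_mul, RingHom.id_apply]; ring

lemma det₂_apply (v₀ v : E × E) : det₂ v₀ v = v₀.2 * v.1 - v₀.1 * v.2 :=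
  rfl

lemma det₂_self (v₀ : E × E) : det₂ v₀ v₀ = 0 := by
  rw [det₂_apply, mul_comm, sub_self]

lemma ker_det₂ {v₀ : E × E} (hv₀ : v₀ ≠ 0) : LinearMap.ker (det₂ v₀) = span E {v₀} := by
  have hne : det₂ v₀ ≠ 0 := fun h => hv₀ <| by
    have h₁ := LinearMap.congr_fun h (0, 1)
    have h₂ := LinearMap.congr_fun h (1, 0)
    simp only [det₂_apply, LinearMap.zero_apply] at h₁ h₂
    exact Prod.ext (by simpa using h₁) (by simpa using h₂)
  have hrank := LinearMap.finrank_range_add_finrank_ker (det₂ v₀)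
  rw [Module.Dual.range_eq_top_of_ne_zero hne, finrank_top, finrank_self, finrank_prod,
    finrank_self] at hrank
  refine (eq_of_le_of_finrank_eq (span_singleton_le_iff_mem _ _ |>.2 (det₂_self v₀)) ?_).symm
  rw [finrank_span_singleton hv₀]
  omega

lemma det₂_eq_zero_iff {v₀ : E × E} (hv₀ : v₀ ≠ 0) {v : E × E} :
    det₂ v₀ v = 0 ↔ v ∈ span E {v₀} := by
  rw [← ker_det₂ hv₀, LinearMap.mem_ker]

end Det

namespace Submodule

variable {F E : Type*} [Field F] [Field E] [Algebra F E] [Algebra.IsAlgebraic F E]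

def stabilizerField (T : Submodule F E) : IntermediateField F E :=
  let S : Subalgebra F E :=
    { carrier := {e | ∀ t ∈ T, e * t ∈ T}
      mul_mem' := fun ha hb t ht => (mul_assoc _ _ t).symm ▸ ha _ (hb t ht)
      add_mem' := fun ha hb t ht => (add_mul _ _ t).symm ▸ T.add_mem (ha t ht) (hb t ht)
      algebraMap_mem' := fun r t ht => (Algebra.smul_def r t) ▸ T.smul_mem r ht }
  S.toIntermediateField' (Subalgebra.isField_of_algebraic S)

lemma mem_stabilizerField {T : Submodule F E} {e : E} :
    e ∈ T.stabilizerField ↔ ∀ t ∈ T, e * t ∈ T :=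
  Iff.rfl

def toStabilizerField (T : Submodule F E) : Submodule T.stabilizerField E where
  carrier := T
  add_mem' := T.add_mem
  zero_mem' := T.zero_mem
  smul_mem' κ _ ht := mem_stabilizerField.1 κ.2 _ ht

lemma finrank_stabilizerField_dvd (T : Submodule F E) :
    finrank F T.stabilizerField ∣ finrank F T :=
  ⟨_, by rw [finrank_mul_finrank F T.stabilizerField T.toStabilizerField]; rfl⟩

variable {M : Type*} [AddCommGroup M] [Module E M]

def linearModel (T : Submodule F E) (u₀ v₀ : M) : Submodule T.stabilizerField M :=
  span T.stabilizerField {u₀} ⊔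
    T.toStabilizerField.map ((LinearMap.toSpanSingleton E M v₀).restrictScalars _)

lemma mem_linearModel {T : Submodule F E} {u₀ v₀ w : M} :
    w ∈ T.linearModel u₀ v₀ ↔ ∃ κ ∈ T.stabilizerField, ∃ t ∈ T, κ • u₀ + t • v₀ = w := by
  simp only [linearModel, mem_sup, mem_span_singleton, mem_map]
  constructor
  · rintro ⟨_, ⟨κ, rfl⟩, _, ⟨t, ht, rfl⟩, rfl⟩
    exact ⟨κ, κ.2, t, ht, rfl⟩
  · rintro ⟨κ, hκ, t, ht, rfl⟩
    exact ⟨_, ⟨⟨κ, hκ⟩, rfl⟩, _, ⟨t, ht, rfl⟩, rfl⟩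

end Submodule

lemma finrank_map_add_finrank_inf_ker {F M N : Type*} [Field F] [AddCommGroup M] [Module F M]
    [AddCommGroup N] [Module F N] (f : M →ₗ[F] N) (U : Submodule F M) [FiniteDimensional F U] :
    finrank F (U.map f) + finrank F ↥(U ⊓ LinearMap.ker f) = finrank F U := by
  have := LinearMap.finrank_range_add_finrank_ker (f.domRestrict U)
  rwa [LinearMap.range_domRestrict, LinearMap.ker_domRestrict, ← finrank_map_subtype_eq,
    map_comap_subtype] at this

lemma finrank_le_finrank_of_div_mem {F E : Type*} [Field F] [Field E] [Algebra F E]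
    [FiniteDimensional F E] {B : Submodule F E} {K : IntermediateField F E} {b₀ : E}
    (hb₀ : b₀ ≠ 0) (h : ∀ c ∈ B, c / b₀ ∈ K) : finrank F B ≤ finrank F K :=
  calc finrank F B
      ≤ finrank F (coeffSpace E (Subalgebra.toSubmodule K.toSubalgebra) b₀⁻¹) :=
        Submodule.finrank_mono fun c hc => by simpa [div_eq_mul_inv] using h c hc
    _ = finrank F K := finrank_coeffSpace_self _ (inv_ne_zero hb₀)

lemma LSet_subset_LSet {F E : Type*} [Field F] [Field E] [Algebra F E] {W U : Submodule F (E × E)}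
    (h : ∀ w ∈ W, w ≠ 0 → ∃ a : E, a ≠ 0 ∧ a • w ∈ U) : LSet F W ⊆ LSet F U := by
  rintro _ ⟨w, hw, hw0, rfl⟩
  obtain ⟨a, ha, haw⟩ := h w hw hw0
  exact ⟨a • w, haw, smul_ne_zero ha hw0, (span_singleton_smul_eq ha.isUnit w).symm⟩

section DetImage

variable {F E : Type*} [Field F] [Field E] [Algebra F E] {U : Submodule F (E × E)} {v₀ : E × E}

def detImage (U : Submodule F (E × E)) (v₀ : E × E) : Submodule F E :=
  U.map ((det₂ v₀).restrictScalars F)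

lemma mem_detImage {b : E} : b ∈ detImage U v₀ ↔ ∃ u ∈ U, det₂ v₀ u = b :=
  Iff.rfl

lemma finrank_detImage_add [FiniteDimensional F U] (hv₀ : v₀ ≠ 0) :
    finrank F (detImage U v₀) + finrank F ↥(U ⊓ (span E {v₀}).restrictScalars F) =
      finrank F U := by
  rw [← ker_det₂ hv₀, ← LinearMap.ker_restrictScalars]
  exact finrank_map_add_finrank_inf_ker _ U

variable [FiniteDimensional F E]

lemma div_det₂_smul_mem (hB : finrank F (detImage U v₀) = 2)
    (hwt : ∀ u ∈ U, det₂ v₀ u ≠ 0 → finrank F (coeffSpace E U u) = 2) :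
    ∀ u ∈ U, det₂ v₀ u ≠ 0 → ∀ c ∈ detImage U v₀, (c / det₂ v₀ u) • u ∈ U := by
  intro u hu hyu c hc
  have hcoeff : coeffSpace E U u = coeffSpace E (detImage U v₀) (det₂ v₀ u) :=
    eq_of_le_of_finrank_eq (coeffSpace_le_coeffSpace_map (det₂ v₀) U u)
      (by rw [hwt u hu hyu, finrank_coeffSpace_self _ hyu, hB])
  have : c / det₂ v₀ u ∈ coeffSpace E (detImage U v₀) (det₂ v₀ u) := by
    rwa [mem_coeffSpace, smul_eq_mul, div_mul_cancel₀ c hyu]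
  rwa [← hcoeff] at this

lemma div_mem_stabilizerField
    (hdiv : ∀ u ∈ U, det₂ v₀ u ≠ 0 → ∀ c ∈ detImage U v₀, (c / det₂ v₀ u) • u ∈ U) {b c : E}
    (hb : b ∈ detImage U v₀) (hb0 : b ≠ 0) (hc : c ∈ detImage U v₀) :
    c / b ∈ (coeffSpace E U v₀).stabilizerField := by
  obtain ⟨u, hu, rfl⟩ := mem_detImage.1 hb
  refine mem_stabilizerField.2 fun t ht => ?_
  rw [mem_coeffSpace] at ht ⊢
  have hy : det₂ v₀ (t • v₀ + u) = det₂ v₀ u := by simp [det₂_self]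
  have h₁ := hdiv _ (U.add_mem ht hu) (hy ▸ hb0) c hc
  have h₂ := hdiv u hu hb0 c hc
  rw [hy, smul_add] at h₁
  simpa [mul_smul] using U.sub_mem h₁ h₂

lemma smul_add_mem_linearModel (hv₀ : v₀ ≠ 0) {u₀ z : E × E} {κ : E}
    (hκ : κ ∈ (coeffSpace E U v₀).stabilizerField) (hz : z ∈ U) (hyz : det₂ v₀ z = 0) :
    κ • u₀ + z ∈ (coeffSpace E U v₀).linearModel u₀ v₀ := by
  obtain ⟨t, rfl⟩ := mem_span_singleton.1 ((det₂_eq_zero_iff hv₀).1 hyz)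
  exact mem_linearModel.2 ⟨κ, hκ, t, hz, rfl⟩

lemma exists_smul_mem_of_mem_linearModel {u₀ w : E × E} (hu₀ : u₀ ∈ U)
    (hw : w ∈ (coeffSpace E U v₀).linearModel u₀ v₀) (hw0 : w ≠ 0) :
    ∃ a : E, a ≠ 0 ∧ a • w ∈ U := by
  obtain ⟨κ, hκ, t, ht, rfl⟩ := mem_linearModel.1 hw
  rcases eq_or_ne κ 0 with rfl | hκ0
  · exact ⟨1, one_ne_zero, by simpa using ht⟩
  · refine ⟨κ⁻¹, inv_ne_zero hκ0, ?_⟩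
    have : (κ⁻¹ * t) • v₀ ∈ U := mem_stabilizerField.1 (inv_mem hκ) t ht
    rw [smul_add, smul_smul, inv_mul_cancel₀ hκ0, one_smul, smul_smul]
    exact U.add_mem hu₀ this

lemma exists_smul_mem_linearModel_of_mem (hv₀ : v₀ ≠ 0)
    (hdiv : ∀ u ∈ U, det₂ v₀ u ≠ 0 → ∀ c ∈ detImage U v₀, (c / det₂ v₀ u) • u ∈ U)
    {u₀ u : E × E} (hu₀ : u₀ ∈ U) (hy₀ : det₂ v₀ u₀ ≠ 0) (hu : u ∈ U) :
    ∃ a : E, a ≠ 0 ∧ a • u ∈ (coeffSpace E U v₀).linearModel u₀ v₀ := by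
  rcases eq_or_ne (det₂ v₀ u) 0 with hyu | hyu
  · refine ⟨1, one_ne_zero, ?_⟩
    simpa using smul_add_mem_linearModel hv₀ (zero_mem _) hu hyu
  · set a := det₂ v₀ u₀ / det₂ v₀ u
    have hau : a • u ∈ U := hdiv u hu hyu _ ⟨u₀, hu₀, rfl⟩
    have hyz : det₂ v₀ (a • u - u₀) = 0 := by
      rw [map_sub, map_smul, smul_eq_mul, div_mul_cancel₀ _ hyu, sub_self]
    refine ⟨a, div_ne_zero hy₀ hyu, ?_⟩
    simpa using smul_add_mem_linearModel (u₀ := u₀) hv₀ (one_mem _) (U.sub_mem hau hu₀) hyz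

end DetImage

theorem stmt_17_general (F E : Type*) [Field F] [Field E] [Algebra F E]
    [FiniteDimensional F E] (k : ℕ) (hk5 : 5 ≤ k)
    (U : Submodule F (E × E)) (hU : Module.finrank F U = k)
    (v₀ : E × E) (hv₀ : v₀ ≠ 0)
    (hv₀wt : Module.finrank F ↥(U ⊓ (Submodule.span E {v₀}).restrictScalars F) = k - 2)
    (hwt : ∀ u ∈ U, u ≠ 0 → u ∉ Submodule.span E {v₀} →
      Module.finrank F ↥(U ⊓ (Submodule.span E {u}).restrictScalars F) = 2) :
    ∃ K : IntermediateField F E, ∃ W : Submodule F (E × E),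
      (∀ x ∈ K, ∀ w ∈ W, x • w ∈ W) ∧ LSet F W = LSet F U ∧
      1 < Module.finrank F K ∧ Module.finrank F K ∣ k - 2 := by
  have hB : finrank F (detImage U v₀) = 2 := by
    have := finrank_detImage_add (U := U) hv₀
    omega
  have hdiv : ∀ u ∈ U, det₂ v₀ u ≠ 0 → ∀ c ∈ detImage U v₀, (c / det₂ v₀ u) • u ∈ U := by
    refine div_det₂_smul_mem hB fun u hu hyu => ?_
    have hu0 : u ≠ 0 := by rintro rfl; exact hyu (map_zero _)
    rw [finrank_coeffSpace U hu0]
    exact hwt u hu hu0 ((det₂_eq_zero_iff hv₀).not.1 hyu)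
  obtain ⟨b₀, hb₀, hb₀0⟩ := (detImage U v₀).exists_mem_ne_zero_of_ne_bot fun h => by
    rw [h, finrank_bot] at hB
    omega
  obtain ⟨u₀, hu₀, rfl⟩ := mem_detImage.1 hb₀
  let T := coeffSpace E U v₀
  refine ⟨T.stabilizerField, (T.linearModel u₀ v₀).restrictScalars F,
    fun x hx w hw => (T.linearModel u₀ v₀).smul_mem ⟨x, hx⟩ hw, ?_, ?_, ?_⟩
  · exact (LSet_subset_LSet fun w hw hw0 => exists_smul_mem_of_mem_linearModel hu₀ hw hw0).antisymm
      (LSet_subset_LSet fun u hu _ => exists_smul_mem_linearModel_of_mem hv₀ hdiv hu₀ hb₀0 hu)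
  · refine lt_of_lt_of_le ?_ (finrank_le_finrank_of_div_mem hb₀0 fun c hc =>
      div_mem_stabilizerField hdiv hb₀ hb₀0 hc)
    omega
  · rw [← hv₀wt, ← finrank_coeffSpace U hv₀]
    exact T.finrank_stabilizerField_dvd

theorem stmt_17 (F E : Type*) [Field F] [Fintype F] [Field E] [Algebra F E]
    [FiniteDimensional F E] (q h k : ℕ) (hq : Fintype.card F = q)
    (hh : Module.finrank F E = h) (hk5 : 5 ≤ k) (hkh : k ≤ h)
    (U : Submodule F (E × E)) (hU : Module.finrank F U = k)
    (v₀ : E × E) (hv₀U : v₀ ∈ U) (hv₀ : v₀ ≠ 0)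
    (hv₀wt : Module.finrank F ↥(U ⊓ (Submodule.span E {v₀}).restrictScalars F) = k - 2)
    (hwt : ∀ u ∈ U, u ≠ 0 → u ∉ Submodule.span E {v₀} →
      Module.finrank F ↥(U ⊓ (Submodule.span E {u}).restrictScalars F) = 2) :
    ∃ K : IntermediateField F E, ∃ W : Submodule F (E × E),
      (∀ x ∈ K, ∀ w ∈ W, x • w ∈ W) ∧ LSet F W = LSet F U ∧
      1 < Module.finrank F K ∧ Module.finrank F K ∣ k - 2 :=
  stmt_17_general F E k hk5 U hU v₀ hv₀ hv₀wt hwt
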